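/- arXiv:1207.3762 — 2 statements merged into one kernel-verified Lean document; each statement's English description precedes it below -/
import Mathlib

section
/- Under the fiber bunching hypothesis, for points y ∈ W^s_loc(x) the sequence H^n_{x,y} = A^n(y)^{-1} A^n(x) satisfies ‖H^{n+1}_{x,y} − H^n_{x,y}‖ ≤ C·C₂·τ^n·d(x,y)^η for constants C, C₂ > 0 and τ ∈ (0,1), hence (H^n_{x,y})_n is a Cauchy sequence converging uniformly in (x,y). -/
/-!
Writing `E_n = A(fⁿy)⁻¹ A(fⁿx)`, the telescoping identity
`H^{n+1}_{x,y} - H^n_{x,y} = A^n(y)⁻¹ (E_n - 1) A^n(x)` reduces the step to the Hölder bound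
`‖E_n - 1‖ ≤ C₂ d(fⁿx, fⁿy)^η ≤ C₂ (θ^n(x) d(x,y))^η`; fiber bunching absorbs the factor
`‖A^n(x)‖ ‖A^n(y)⁻¹‖ θ^n(x)^η` into `C τⁿ`. Since `d(x,y) ≤ 1` on local stable sets, the steps are
bounded by the geometric sequence `C C₂ τⁿ` uniformly in `(x,y)`, whence uniform convergence.
-/

open Finset Filter Topology

theorem tendstoUniformlyOn_limUnder_of_dist_le_geometric {α E : Type*} [PseudoMetricSpace E]
    [CompleteSpace E] [Nonempty E] {F : ℕ → α → E} {s : Set α} {C r : ℝ} (hr₀ : 0 ≤ r)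
    (hr : r < 1)
    (hF : ∀ a ∈ s, ∀ n, dist (F n a) (F (n + 1) a) ≤ C * r ^ n) :
    TendstoUniformlyOn F (fun a ↦ limUnder atTop (F · a)) atTop s := by
  rw [Metric.tendstoUniformlyOn_iff]
  intro ε hε
  have hbound : Tendsto (fun n ↦ C * r ^ n / (1 - r)) atTop (𝓝 0) := by
    simpa using ((tendsto_pow_atTop_nhds_zero_of_lt_one hr₀ hr).const_mul C).div_const (1 - r)
  filter_upwards [hbound.eventually (gt_mem_nhds hε)] with n hn a ha
  have hlim := (cauchySeq_of_le_geometric r C hr (hF a ha)).tendsto_limUnder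
  rw [dist_comm]
  exact (dist_le_of_le_geometric_of_tendsto r C hr (hF a ha) hlim n).trans_lt hn

theorem iterate_mem_of_map_mem {X : Type*} {f : X → X} {W : X → Set X}
    (hWf : ∀ x y, y ∈ W x → f y ∈ W (f x)) {x y : X} (hy : y ∈ W x) (n : ℕ) : f^[n] y ∈ W (f^[n] x) := by
  induction n with
  | zero => exact hy
  | succ n ih =>
    rw [Function.iterate_succ_apply', Function.iterate_succ_apply']
    exact hWf _ _ ih

theorem dist_iterate_le_prod_mul_dist {X : Type*} [PseudoMetricSpace X] {f : X → X}
    {W : X → Set X} {θ : X → ℝ} (hθ : ∀ x, 0 ≤ θ x)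
    (hWf : ∀ x y, y ∈ W x → f y ∈ W (f x))
    (hcontr : ∀ x, ∀ y ∈ W x, dist (f x) (f y) ≤ θ x * dist x y) {x y : X} (hy : y ∈ W x)
    (n : ℕ) : dist (f^[n] x) (f^[n] y) ≤ (∏ i ∈ range n, θ (f^[i] x)) * dist x y := by
  induction n with
  | zero => simp
  | succ n ih =>
    rw [Function.iterate_succ_apply', Function.iterate_succ_apply', prod_range_succ]
    calc dist (f (f^[n] x)) (f (f^[n] y))
        ≤ θ (f^[n] x) * dist (f^[n] x) (f^[n] y) :=
          hcontr _ _ (iterate_mem_of_map_mem hWf hy n)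
      _ ≤ θ (f^[n] x) * ((∏ i ∈ range n, θ (f^[i] x)) * dist x y) := by gcongr; exact hθ _
      _ = (∏ i ∈ range n, θ (f^[i] x)) * θ (f^[n] x) * dist x y := by ring

theorem cocycle_succ_sub {X R : Type*} [Ring R] {f : X → X} {A Ainv : X → R}
    {An Bn : ℕ → X → R} (hAn : ∀ n x, An (n + 1) x = A (f^[n] x) * An n x)
    (hBn : ∀ n x, Bn (n + 1) x = Bn n x * Ainv (f^[n] x)) (n : ℕ) (x y : X) :
    Bn (n + 1) y * An (n + 1) x - Bn n y * An n x =
      Bn n y * (Ainv (f^[n] y) * A (f^[n] x) - 1) * An n x := by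
  rw [hAn, hBn]
  noncomm_ring

section Cocycle

variable {X R : Type*} [PseudoMetricSpace X] [NormedRing R] {f : X → X} {W : X → Set X}
  {θ : X → ℝ} {A Ainv : X → R} {An Bn : ℕ → X → R} {η C₂ : ℝ}

theorem norm_mul_iterate_sub_one_le (hθ : ∀ x, 0 ≤ θ x) (hη : 0 ≤ η) (hC₂ : 0 ≤ C₂)
    (hWf : ∀ x y, y ∈ W x → f y ∈ W (f x))
    (hcontr : ∀ x, ∀ y ∈ W x, dist (f x) (f y) ≤ θ x * dist x y)
    (hHol : ∀ u, ∀ v ∈ W u, ‖Ainv u * A v - 1‖ ≤ C₂ * dist u v ^ η) {x y : X}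
    (hy : y ∈ W x) (hx : x ∈ W y) (n : ℕ) :
    ‖Ainv (f^[n] y) * A (f^[n] x) - 1‖ ≤
      C₂ * (∏ i ∈ range n, θ (f^[i] x)) ^ η * dist x y ^ η := by
  have hP : 0 ≤ ∏ i ∈ range n, θ (f^[i] x) := prod_nonneg fun i _ ↦ hθ _
  calc ‖Ainv (f^[n] y) * A (f^[n] x) - 1‖
      ≤ C₂ * dist (f^[n] y) (f^[n] x) ^ η := hHol _ _ (iterate_mem_of_map_mem hWf hx n)
    _ ≤ C₂ * ((∏ i ∈ range n, θ (f^[i] x)) * dist x y) ^ η := by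
        rw [dist_comm]
        gcongr
        exact dist_iterate_le_prod_mul_dist hθ hWf hcontr hy n
    _ = C₂ * (∏ i ∈ range n, θ (f^[i] x)) ^ η * dist x y ^ η := by
        rw [Real.mul_rpow hP dist_nonneg, mul_assoc]

theorem norm_cocycle_succ_sub_le {τ C : ℝ}
    (hAn : ∀ n x, An (n + 1) x = A (f^[n] x) * An n x)
    (hBn : ∀ n x, Bn (n + 1) x = Bn n x * Ainv (f^[n] x)) (hθ : ∀ x, 0 ≤ θ x) (hη : 0 ≤ η)
    (hC₂ : 0 ≤ C₂)
    (hWf : ∀ x y, y ∈ W x → f y ∈ W (f x))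
    (hcontr : ∀ x, ∀ y ∈ W x, dist (f x) (f y) ≤ θ x * dist x y)
    (hHol : ∀ u, ∀ v ∈ W u, ‖Ainv u * A v - 1‖ ≤ C₂ * dist u v ^ η) {x y : X}
    (hy : y ∈ W x) (hx : x ∈ W y) (n : ℕ)
    (hbunch : ‖An n x‖ * ‖Bn n y‖ * (∏ i ∈ range n, θ (f^[i] x)) ^ η ≤ C * τ ^ n) :
    ‖Bn (n + 1) y * An (n + 1) x - Bn n y * An n x‖ ≤ C * C₂ * τ ^ n * dist x y ^ η := by
  rw [cocycle_succ_sub hAn hBn]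
  calc ‖Bn n y * (Ainv (f^[n] y) * A (f^[n] x) - 1) * An n x‖
      ≤ ‖Bn n y‖ * ‖Ainv (f^[n] y) * A (f^[n] x) - 1‖ * ‖An n x‖ := norm_mul₃_le
    _ ≤ ‖Bn n y‖ * (C₂ * (∏ i ∈ range n, θ (f^[i] x)) ^ η * dist x y ^ η) * ‖An n x‖ := by
        gcongr
        exact norm_mul_iterate_sub_one_le hθ hη hC₂ hWf hcontr hHol hy hx n
    _ = C₂ * (‖An n x‖ * ‖Bn n y‖ * (∏ i ∈ range n, θ (f^[i] x)) ^ η) * dist x y ^ η := by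
        ring
    _ ≤ C₂ * (C * τ ^ n) * dist x y ^ η := by gcongr
    _ = C * C₂ * τ ^ n * dist x y ^ η := by ring

end Cocycle

theorem stmt3_general {N : Type*} [MetricSpace N] {d : ℕ}
    (f : N → N) (Ws : N → Set N) (θ : N → ℝ) (η τ C C₂ : ℝ)
    (A Ainv : N → (EuclideanSpace ℂ (Fin d) →L[ℂ] EuclideanSpace ℂ (Fin d)))
    (An Bn : ℕ → N → (EuclideanSpace ℂ (Fin d) →L[ℂ] EuclideanSpace ℂ (Fin d)))
    (H : ℕ → N → N → (EuclideanSpace ℂ (Fin d) →L[ℂ] EuclideanSpace ℂ (Fin d)))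
    (hθpos : ∀ x, 0 < θ x)
    (hη : 0 < η) (hτ : 0 < τ) (hτ1 : τ < 1) (hC : 0 < C) (hC₂ : 0 < C₂)
    (hAnrec : ∀ n x, An (n + 1) x = A (f^[n] x) * An n x)
    (hBnrec : ∀ n x, Bn (n + 1) x = Bn n x * Ainv (f^[n] x))
    (hHdef : ∀ n x y, H n x y = Bn n y * An n x)
    (hWsRefl : ∀ x, x ∈ Ws x)
    (hWsSymm : ∀ x y, y ∈ Ws x → x ∈ Ws y)
    (hWsf : ∀ x y, y ∈ Ws x → f y ∈ Ws (f x))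
    (hWsBdd : ∀ x y, y ∈ Ws x → dist x y ≤ 1)
    (hcontr : ∀ x, ∀ y ∈ Ws x, ∀ z ∈ Ws x, dist (f y) (f z) ≤ θ x * dist y z)
    (hLem : ∀ x, ∀ y ∈ Ws x, ∀ z ∈ Ws x, ∀ n : ℕ,
      ‖An n y‖ * ‖Bn n z‖ * (∏ i ∈ Finset.range n, θ (f^[i] x)) ^ η ≤ C * τ ^ n)
    (hHol : ∀ u, ∀ v ∈ Ws u, ‖Ainv u * A v - 1‖ ≤ C₂ * dist u v ^ η) :
    (∀ x, ∀ y ∈ Ws x, ∀ n : ℕ,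
        ‖H (n + 1) x y - H n x y‖ ≤ C * C₂ * τ ^ n * dist x y ^ η) ∧
      ∃ Hs : N → N → (EuclideanSpace ℂ (Fin d) →L[ℂ] EuclideanSpace ℂ (Fin d)),
        ∀ ε > 0, ∃ n₀ : ℕ, ∀ n ≥ n₀, ∀ x, ∀ y ∈ Ws x,
          ‖H n x y - Hs x y‖ ≤ ε := by
  have hstep : ∀ x, ∀ y ∈ Ws x, ∀ n : ℕ,
      ‖H (n + 1) x y - H n x y‖ ≤ C * C₂ * τ ^ n * dist x y ^ η := fun x y hy n ↦ by
    rw [hHdef, hHdef]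
    exact norm_cocycle_succ_sub_le hAnrec hBnrec (fun x ↦ (hθpos x).le) hη.le hC₂.le hWsf
      (fun x ↦ hcontr x x (hWsRefl x)) hHol hy (hWsSymm x y hy) n
      (hLem x x (hWsRefl x) y hy n)
  have hgeom : ∀ p ∈ {p : N × N | p.2 ∈ Ws p.1}, ∀ n : ℕ,
      dist (H n p.1 p.2) (H (n + 1) p.1 p.2) ≤ C * C₂ * τ ^ n := fun p hp n ↦ by
    rw [dist_comm, dist_eq_norm]
    refine (hstep p.1 p.2 hp n).trans (mul_le_of_le_one_right (by positivity) ?_)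
    exact Real.rpow_le_one dist_nonneg (hWsBdd _ _ hp) hη.le
  have hunif := Metric.tendstoUniformlyOn_iff.1
    (tendstoUniformlyOn_limUnder_of_dist_le_geometric hτ.le hτ1 hgeom)
  refine ⟨hstep, fun x y ↦ limUnder atTop (fun n ↦ H n x y), fun ε hε ↦ ?_⟩
  obtain ⟨n₀, hn₀⟩ := eventually_atTop.1 (hunif ε hε)
  refine ⟨n₀, fun n hn x y hy ↦ ?_⟩
  rw [← dist_eq_norm, dist_comm]
  exact (hn₀ n hn (x, y) hy).le

/-- The sequence `H^n_{x,y} = A^n(y)^{-1} A^n(x)` satisfies the Cauchy estimate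
`‖H^{n+1} - H^n‖ ≤ C C₂ τ^n d(x,y)^η`, hence converges uniformly on stable pairs. -/
theorem stmt3 {N : Type*} [MetricSpace N] {d : ℕ}
    (f : N → N) (Ws : N → Set N) (θ : N → ℝ) (η τ C C₂ : ℝ)
    (A Ainv : N → (EuclideanSpace ℂ (Fin d) →L[ℂ] EuclideanSpace ℂ (Fin d)))
    (An Bn : ℕ → N → (EuclideanSpace ℂ (Fin d) →L[ℂ] EuclideanSpace ℂ (Fin d)))
    (H : ℕ → N → N → (EuclideanSpace ℂ (Fin d) →L[ℂ] EuclideanSpace ℂ (Fin d)))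
    (hθpos : ∀ x, 0 < θ x)
    (hη : 0 < η) (hτ : 0 < τ) (hτ1 : τ < 1) (hC : 0 < C) (hC₂ : 0 < C₂)
    (hinv : ∀ x, A x * Ainv x = 1) (hinv' : ∀ x, Ainv x * A x = 1)
    (hAn0 : ∀ x, An 0 x = 1)
    (hAnrec : ∀ n x, An (n + 1) x = A (f^[n] x) * An n x)
    (hBn0 : ∀ x, Bn 0 x = 1)
    (hBnrec : ∀ n x, Bn (n + 1) x = Bn n x * Ainv (f^[n] x))
    (hHdef : ∀ n x y, H n x y = Bn n y * An n x)
    (hWsRefl : ∀ x, x ∈ Ws x)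
    (hWsSymm : ∀ x y, y ∈ Ws x → x ∈ Ws y)
    (hWsf : ∀ x y, y ∈ Ws x → f y ∈ Ws (f x))
    (hWsBdd : ∀ x y, y ∈ Ws x → dist x y ≤ 1)
    (hcontr : ∀ x, ∀ y ∈ Ws x, ∀ z ∈ Ws x, dist (f y) (f z) ≤ θ x * dist y z)
    (hLem : ∀ x, ∀ y ∈ Ws x, ∀ z ∈ Ws x, ∀ n : ℕ,
      ‖An n y‖ * ‖Bn n z‖ * (∏ i ∈ Finset.range n, θ (f^[i] x)) ^ η ≤ C * τ ^ n)
    (hHol : ∀ u, ∀ v ∈ Ws u, ‖Ainv u * A v - 1‖ ≤ C₂ * dist u v ^ η) :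
    (∀ x, ∀ y ∈ Ws x, ∀ n : ℕ,
        ‖H (n + 1) x y - H n x y‖ ≤ C * C₂ * τ ^ n * dist x y ^ η) ∧
      ∃ Hs : N → N → (EuclideanSpace ℂ (Fin d) →L[ℂ] EuclideanSpace ℂ (Fin d)),
        ∀ ε > 0, ∃ n₀ : ℕ, ∀ n ≥ n₀, ∀ x, ∀ y ∈ Ws x,
          ‖H n x y - Hs x y‖ ≤ ε :=
  stmt3_general f Ws θ η τ C C₂ A Ainv An Bn H hθpos hη hτ hτ1 hC hC₂ hAnrec hBnrec hHdef hWsRefl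
    hWsSymm hWsf hWsBdd hcontr hLem hHol
end

section
/- Under fiber bunching, the i-th term of the series defining ∂_B H^s_{B,x,y}(Ḃ), namely B^i(y)^{-1}[H^s_{f^i(x),f^i(y)} B(f^i(x))^{-1} Ḃ(f^i(x)) − B(f^i(y))^{-1} Ḃ(f^i(y)) H^s_{f^i(x),f^i(y)}] B^i(x), has norm bounded by C₄ τ^i d(x,y)^η ‖Ḃ‖_{0,η} for a uniform constant C₄; hence the series converges absolutely and uniformly, with total norm at most C₄ d(x,y)^η ‖Ḃ‖_{0,η}/(1−τ). -/
/-!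
Write `H = H^s_{f^i x, f^i y}`, `A = B⁻¹ Ḃ`, `p = f^i x`, `q = f^i y`. The bracket is
`H A(p) - A(q) H = (H - 1) A(p) + (A(p) - A(q)) + A(q) (1 - H)`, and each piece is
`O(d(p,q)^η ‖Ḃ‖_{0,η})` because `H` is Hölder close to the identity and `A` is Hölder. Since
`d(p,q) ≤ θ^i(x) d(x,y)`, the factor `θ^i(x)^η` this produces is exactly what fiber bunching
needs to absorb the norms `‖B^i(y)⁻¹‖ ‖B^i(x)‖` of the outer factors, leaving `C τ^i`.
-/

open Finset

theorem iterate_rel_iterate {α : Type*} {r : α → α → Prop} {f : α → α}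
    (hf : ∀ x y, r x y → r (f x) (f y)) {x y : α} (hxy : r x y) (n : ℕ) :
    r (f^[n] x) (f^[n] y) := by
  induction n with
  | zero => exact hxy
  | succ n ih =>
    rw [Function.iterate_succ_apply', Function.iterate_succ_apply']
    exact hf _ _ ih

theorem summable_and_tsum_le_of_le_geometric {a : ℕ → ℝ} {c τ : ℝ} (hτ0 : 0 ≤ τ) (hτ1 : τ < 1)
    (ha0 : ∀ i, 0 ≤ a i) (ha : ∀ i, a i ≤ c * τ ^ i) :
    Summable a ∧ ∑' i, a i ≤ c / (1 - τ) := by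
  have hgeom : Summable fun i => c * τ ^ i := (summable_geometric_of_lt_one hτ0 hτ1).mul_left c
  have hsum : Summable a := hgeom.of_nonneg_of_le ha0 ha
  refine ⟨hsum, ?_⟩
  calc ∑' i, a i ≤ ∑' i, c * τ ^ i := hsum.tsum_le_tsum ha hgeom
    _ = c / (1 - τ) := by rw [tsum_mul_left, tsum_geometric_of_lt_one hτ0 hτ1, div_eq_mul_inv]

section NormedRing

variable {R : Type*} [NormedRing R]

theorem norm_mul_sub_mul_le (a b a' b' : R) :
    ‖a * b - a' * b'‖ ≤ ‖a - a'‖ * ‖b‖ + ‖a'‖ * ‖b - b'‖ := by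
  have hsplit : a * b - a' * b' = (a - a') * b + a' * (b - b') := by noncomm_ring
  rw [hsplit]
  exact (norm_add_le _ _).trans (add_le_add (norm_mul_le _ _) (norm_mul_le _ _))

theorem norm_mul_sub_mul_le_of_sub_one (h a a' : R) :
    ‖h * a - a' * h‖ ≤ ‖h - 1‖ * ‖a‖ + ‖a - a'‖ + ‖a'‖ * ‖h - 1‖ := by
  have hsplit : h * a - a' * h = (h - 1) * a + (a - a') + a' * (1 - h) := by noncomm_ring
  rw [hsplit]
  exact norm_add₃_le.trans (add_le_add (add_le_add (norm_mul_le _ _) le_rfl)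
    ((norm_mul_le _ _).trans_eq (by rw [norm_sub_rev])))

theorem norm_mul_sub_mul_le_of_holder {X : Type*} [PseudoMetricSpace X] {g k : X → R}
    {K L η : ℝ} (hK : 0 ≤ K)
    (hgHol : ∀ x y, ‖g x - g y‖ ≤ K * dist x y ^ η) (hgBd : ∀ x, ‖g x‖ ≤ K)
    (hkHol : ∀ x y, ‖k x - k y‖ ≤ L * dist x y ^ η) (hkBd : ∀ x, ‖k x‖ ≤ L) (x y : X) :
    ‖g x * k x - g y * k y‖ ≤ 2 * K * L * dist x y ^ η := by
  calc ‖g x * k x - g y * k y‖ ≤ ‖g x - g y‖ * ‖k x‖ + ‖g y‖ * ‖k x - k y‖ :=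
        norm_mul_sub_mul_le _ _ _ _
    _ ≤ (K * dist x y ^ η) * L + K * (L * dist x y ^ η) := by
        gcongr
        · exact hgHol x y
        · exact hkBd x
        · exact hgBd y
        · exact hkHol x y
    _ = 2 * K * L * dist x y ^ η := by ring

theorem norm_holonomy_bracket_le {X : Type*} [PseudoMetricSpace X] {Hs : X → X → R}
    {Binv Bdot : X → R} {η Cbar KB KBdot : ℝ} (hCbar : 0 ≤ Cbar) (hKB : 0 ≤ KB)
    (hKBdot : 0 ≤ KBdot)
    (hBinvHol : ∀ x y, ‖Binv x - Binv y‖ ≤ KB * dist x y ^ η) (hBinvBd : ∀ x, ‖Binv x‖ ≤ KB)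
    (hBdotHol : ∀ x y, ‖Bdot x - Bdot y‖ ≤ KBdot * dist x y ^ η)
    (hBdotBd : ∀ x, ‖Bdot x‖ ≤ KBdot) {p q : X} (hHs : ‖Hs p q - 1‖ ≤ Cbar * dist p q ^ η) :
    ‖Hs p q * Binv p * Bdot p - Binv q * Bdot q * Hs p q‖
      ≤ 2 * (Cbar + 1) * KB * KBdot * dist p q ^ η := by
  have hAbd : ∀ z, ‖Binv z * Bdot z‖ ≤ KB * KBdot := fun z =>
    (norm_mul_le _ _).trans (mul_le_mul (hBinvBd z) (hBdotBd z) (norm_nonneg _) hKB)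
  rw [mul_assoc]
  calc _ ≤ ‖Hs p q - 1‖ * ‖Binv p * Bdot p‖ + ‖Binv p * Bdot p - Binv q * Bdot q‖
          + ‖Binv q * Bdot q‖ * ‖Hs p q - 1‖ := norm_mul_sub_mul_le_of_sub_one _ _ _
    _ ≤ (Cbar * dist p q ^ η) * (KB * KBdot) + 2 * KB * KBdot * dist p q ^ η
          + (KB * KBdot) * (Cbar * dist p q ^ η) := by
        gcongr
        · exact hAbd p
        · exact norm_mul_sub_mul_le_of_holder hKB hBinvHol hBinvBd hBdotHol hBdotBd p q
        · exact hAbd q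
    _ = 2 * (Cbar + 1) * KB * KBdot * dist p q ^ η := by ring

theorem norm_mul_mul_le_of_bunching {u m v : R} {K D P r η c : ℝ} (hK : 0 ≤ K) (hη : 0 ≤ η)
    (hD : 0 ≤ D) (hP : 0 ≤ P) (hr : 0 ≤ r) (hm : ‖m‖ ≤ K * D ^ η) (hDP : D ≤ P * r)
    (hbunch : ‖u‖ * ‖v‖ * P ^ η ≤ c) :
    ‖u * m * v‖ ≤ K * c * r ^ η := by
  have hDη : D ^ η ≤ P ^ η * r ^ η := by
    rw [← Real.mul_rpow hP hr]
    exact Real.rpow_le_rpow hD hDP hη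
  calc ‖u * m * v‖ ≤ ‖u‖ * ‖m‖ * ‖v‖ :=
        (norm_mul_le _ _).trans (mul_le_mul_of_nonneg_right (norm_mul_le _ _) (norm_nonneg _))
    _ ≤ ‖u‖ * (K * (P ^ η * r ^ η)) * ‖v‖ := by gcongr; exact hm.trans (by gcongr)
    _ = K * r ^ η * (‖u‖ * ‖v‖ * P ^ η) := by ring
    _ ≤ K * r ^ η * c := by gcongr
    _ = K * c * r ^ η := by ring

end NormedRing

theorem stmt19_general {N : Type*} [MetricSpace N] {d : ℕ}
    (f : N → N) (Ws : N → Set N) (θ : N → ℝ) (η τ C Cbar KB KBdot : ℝ)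
    (Binv Bdot : N → (EuclideanSpace ℂ (Fin d) →L[ℂ] EuclideanSpace ℂ (Fin d)))
    (Bn Bninv : ℕ → N → (EuclideanSpace ℂ (Fin d) →L[ℂ] EuclideanSpace ℂ (Fin d)))
    (Hs : N → N → (EuclideanSpace ℂ (Fin d) →L[ℂ] EuclideanSpace ℂ (Fin d)))
    (hη : 0 < η) (hτ : 0 < τ) (hτ1 : τ < 1) (hC : 0 < C) (hCbar : 0 < Cbar)
    (hKB : 0 < KB) (hKBdot : 0 < KBdot) (hθ : ∀ x, 0 < θ x)
    (hWsf : ∀ x y, y ∈ Ws x → f y ∈ Ws (f x))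
    (hcontr : ∀ x, ∀ y ∈ Ws x, ∀ i : ℕ,
      dist (f^[i] x) (f^[i] y) ≤ (∏ k ∈ Finset.range i, θ (f^[k] x)) * dist x y)
    (hbunch : ∀ x, ∀ y ∈ Ws x, ∀ i : ℕ,
      ‖Bninv i y‖ * ‖Bn i x‖ * (∏ k ∈ Finset.range i, θ (f^[k] x)) ^ η ≤ C * τ ^ i)
    (hHsnear : ∀ x, ∀ y ∈ Ws x, ‖Hs x y - 1‖ ≤ Cbar * dist x y ^ η)
    (hBinvHol : ∀ x y, ‖Binv x - Binv y‖ ≤ KB * dist x y ^ η)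
    (hBinvBd : ∀ x, ‖Binv x‖ ≤ KB)
    (hBdotHol : ∀ x y, ‖Bdot x - Bdot y‖ ≤ KBdot * dist x y ^ η)
    (hBdotBd : ∀ x, ‖Bdot x‖ ≤ KBdot) :
    ∃ C₄ > 0, ∀ x, ∀ y ∈ Ws x,
      ∀ T : ℕ → (EuclideanSpace ℂ (Fin d) →L[ℂ] EuclideanSpace ℂ (Fin d)),
        (∀ i, T i =
          Bninv i y *
            (Hs (f^[i] x) (f^[i] y) * Binv (f^[i] x) * Bdot (f^[i] x) -
              Binv (f^[i] y) * Bdot (f^[i] y) * Hs (f^[i] x) (f^[i] y)) *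
            Bn i x) →
        (∀ i, ‖T i‖ ≤ C₄ * τ ^ i * dist x y ^ η * KBdot) ∧
        Summable (fun i => ‖T i‖) ∧
        ∑' i, ‖T i‖ ≤ C₄ * dist x y ^ η * KBdot / (1 - τ) := by
  refine ⟨2 * (Cbar + 1) * KB * C, by positivity, fun x y hy T hT => ?_⟩
  have hterm : ∀ i, ‖T i‖ ≤ 2 * (Cbar + 1) * KB * C * τ ^ i * dist x y ^ η * KBdot := by
    intro i
    have hbracket := norm_holonomy_bracket_le hCbar.le hKB.le hKBdot.le hBinvHol hBinvBd
      hBdotHol hBdotBd (hHsnear _ _ (iterate_rel_iterate (r := fun x y => y ∈ Ws x) hWsf hy i))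
    calc ‖T i‖ ≤ 2 * (Cbar + 1) * KB * KBdot * (C * τ ^ i) * dist x y ^ η := by
          rw [hT i]
          exact norm_mul_mul_le_of_bunching (by positivity) hη.le dist_nonneg
            (prod_nonneg fun k _ => (hθ _).le) dist_nonneg hbracket (hcontr x y hy i)
            (hbunch x y hy i)
      _ = _ := by ring
  obtain ⟨hsum, htsum⟩ := summable_and_tsum_le_of_le_geometric
    (c := 2 * (Cbar + 1) * KB * C * dist x y ^ η * KBdot) hτ.le hτ1
    (fun i => norm_nonneg (T i)) (fun i => (hterm i).trans_eq (by ring))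
  exact ⟨hterm, hsum, htsum.trans_eq (by ring)⟩

/-- Each term of the series defining `∂_B H^s_{B,x,y}(Ḃ)` is bounded by
`C₄ τ^i d(x,y)^η ‖Ḃ‖_{0,η}`; hence the series converges absolutely with total norm
at most `C₄ d(x,y)^η ‖Ḃ‖_{0,η} / (1 − τ)`. -/
theorem stmt19 {N : Type*} [MetricSpace N] {d : ℕ}
    (f : N → N) (Ws : N → Set N) (θ : N → ℝ) (η τ C Cbar KB KBdot : ℝ)
    (B Binv Bdot : N → (EuclideanSpace ℂ (Fin d) →L[ℂ] EuclideanSpace ℂ (Fin d)))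
    (Bn Bninv : ℕ → N → (EuclideanSpace ℂ (Fin d) →L[ℂ] EuclideanSpace ℂ (Fin d)))
    (Hs : N → N → (EuclideanSpace ℂ (Fin d) →L[ℂ] EuclideanSpace ℂ (Fin d)))
    (hη : 0 < η) (hτ : 0 < τ) (hτ1 : τ < 1) (hC : 0 < C) (hCbar : 0 < Cbar)
    (hKB : 0 < KB) (hKBdot : 0 < KBdot) (hθ : ∀ x, 0 < θ x)
    (hWsf : ∀ x y, y ∈ Ws x → f y ∈ Ws (f x))
    (hWsBdd : ∀ x y, y ∈ Ws x → dist x y ≤ 1)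
    (hinv : ∀ x, B x * Binv x = 1) (hinv' : ∀ x, Binv x * B x = 1)
    (hBn0 : ∀ x, Bn 0 x = 1)
    (hBnrec : ∀ n x, Bn (n + 1) x = B (f^[n] x) * Bn n x)
    (hBninv0 : ∀ x, Bninv 0 x = 1)
    (hBninvrec : ∀ n x, Bninv (n + 1) x = Bninv n x * Binv (f^[n] x))
    (hcontr : ∀ x, ∀ y ∈ Ws x, ∀ i : ℕ,
      dist (f^[i] x) (f^[i] y) ≤ (∏ k ∈ Finset.range i, θ (f^[k] x)) * dist x y)
    (hbunch : ∀ x, ∀ y ∈ Ws x, ∀ i : ℕ,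
      ‖Bninv i y‖ * ‖Bn i x‖ * (∏ k ∈ Finset.range i, θ (f^[k] x)) ^ η ≤ C * τ ^ i)
    (hHsnear : ∀ x, ∀ y ∈ Ws x, ‖Hs x y - 1‖ ≤ Cbar * dist x y ^ η)
    (hBinvHol : ∀ x y, ‖Binv x - Binv y‖ ≤ KB * dist x y ^ η)
    (hBinvBd : ∀ x, ‖Binv x‖ ≤ KB)
    (hBdotHol : ∀ x y, ‖Bdot x - Bdot y‖ ≤ KBdot * dist x y ^ η)
    (hBdotBd : ∀ x, ‖Bdot x‖ ≤ KBdot) :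
    ∃ C₄ > 0, ∀ x, ∀ y ∈ Ws x,
      ∀ T : ℕ → (EuclideanSpace ℂ (Fin d) →L[ℂ] EuclideanSpace ℂ (Fin d)),
        (∀ i, T i =
          Bninv i y *
            (Hs (f^[i] x) (f^[i] y) * Binv (f^[i] x) * Bdot (f^[i] x) -
              Binv (f^[i] y) * Bdot (f^[i] y) * Hs (f^[i] x) (f^[i] y)) *
            Bn i x) →
        (∀ i, ‖T i‖ ≤ C₄ * τ ^ i * dist x y ^ η * KBdot) ∧
        Summable (fun i => ‖T i‖) ∧
        ∑' i, ‖T i‖ ≤ C₄ * dist x y ^ η * KBdot / (1 - τ) :=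
  stmt19_general f Ws θ η τ C Cbar KB KBdot Binv Bdot Bn Bninv Hs hη hτ hτ1 hC hCbar hKB hKBdot hθ
    hWsf hcontr hbunch hHsnear hBinvHol hBinvBd hBdotHol hBdotBd
end
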